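/- arXiv:2601.06917 — 7 statements merged into one kernel-verified Lean document; each statement's English description precedes it below -/
import Mathlib

section
/- Let b, τ be real numbers with sin(b·τ) ≠ 0, let p > 0, let z ∈ ℂ, and let v : ℝ → ℝ satisfy v(t) − 2·Re(e^{ibt}·z) = O(t^{−p}) as t → ∞. Define w : ℝ → ℂ by w(t) := (v(t+τ)·e^{−ibt} − v(t)·e^{−ib(t+τ)}) / (2i·sin(bτ)). Then w(t) − z = O(t^{−p}) as t → ∞. -/
open Filter Asymptotics Complex
open scoped ComplexConjugate

/-!
Write `v(t) = e^{ibt} z + e^{-ibt} z̄ + E(t)` with `E = O(t^{-p})`. The two-point formula is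
linear in `v`, reproduces `z` exactly on the phase part (the `z̄` terms cancel and the
remaining factor `e^{ibτ} - e^{-ibτ} = 2i sin(bτ)` is divided out), and maps `E` to a
combination of `E(t)`, `E(t + τ)` with unimodular coefficients, which is again `O(t^{-p})`
since `(t + τ)^{-p} = O(t^{-p})`.
-/

lemma isBigO_rpow_add_const (q τ : ℝ) :
    (fun t : ℝ => (t + τ) ^ q) =O[atTop] fun t => t ^ q := by
  have hshift : (fun t : ℝ => t + τ) =Θ[atTop] fun t => t :=
    (IsEquivalent.refl.add_const_of_norm_tendsto_atTop
      (tendsto_norm_atTop_atTop.comp tendsto_id)).isTheta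
  refine (hshift.rpow ?_ ?_).isBigO
  · filter_upwards [eventually_ge_atTop (-τ)] with t ht
    simp only [Pi.zero_apply]
    linarith
  · filter_upwards [eventually_ge_atTop 0] with t ht using ht

lemma Asymptotics.IsBigO.comp_add_const_rpow {E : Type*} [Norm E] {f : ℝ → E} {q : ℝ}
    (hf : f =O[atTop] fun t => t ^ q) (τ : ℝ) :
    (fun t => f (t + τ)) =O[atTop] fun t => t ^ q :=
  (hf.comp_tendsto (tendsto_atTop_add_const_right atTop τ tendsto_id)).trans
    (isBigO_rpow_add_const q τ)

/-- With `A = e^{ibt}` and `B = e^{ibτ}` this is the two-point formula applied to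
`e^{ibs} z + e^{-ibs} z'` at `s = t` and `s = t + τ`: the `z'` terms cancel. -/
lemma phase_pair_shift_sub {K : Type*} [Field K] {A : K} (hA : A ≠ 0) (B z z' : K) :
    (A * B * z + (A * B)⁻¹ * z') * A⁻¹ - (A * z + A⁻¹ * z') * (A * B)⁻¹ = (B - B⁻¹) * z := by
  by_cases hB : B = 0
  · simp [hB]
  field_simp
  ring

lemma two_mul_I_mul_sin (x : ℂ) : 2 * I * sin x = exp (I * x) - (exp (I * x))⁻¹ := by
  rw [sin, ← exp_neg]
  ring_nf
  rw [I_sq]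
  ring_nf

noncomputable def twoPointInversion (b τ : ℝ) (u : ℝ → ℂ) (t : ℝ) : ℂ :=
  (u (t + τ) * exp (-(I * (b * t))) - u t * exp (-(I * (b * (t + τ)))))
    / (2 * I * (Real.sin (b * τ) : ℂ))

namespace twoPointInversion

variable {b τ : ℝ}

lemma add (u₁ u₂ : ℝ → ℂ) (t : ℝ) :
    twoPointInversion b τ (u₁ + u₂) t =
      twoPointInversion b τ u₁ t + twoPointInversion b τ u₂ t := by
  simp only [twoPointInversion, Pi.add_apply]
  ring

lemma apply_phase_add_conj (hτ : Real.sin (b * τ) ≠ 0) (z : ℂ) (t : ℝ) :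
    twoPointInversion b τ (fun s => exp (I * (b * s)) * z + exp (-(I * (b * s))) * conj z) t =
      z := by
  have hsin : 2 * I * (Real.sin (b * τ) : ℂ) = exp (I * (b * τ)) - (exp (I * (b * τ)))⁻¹ := by
    rw [ofReal_sin, ofReal_mul, two_mul_I_mul_sin]
  have hsplit : exp (I * (b * (t + τ))) = exp (I * (b * t)) * exp (I * (b * τ)) := by
    rw [← exp_add]; ring_nf
  have hden : 2 * I * (Real.sin (b * τ) : ℂ) ≠ 0 :=
    mul_ne_zero (mul_ne_zero two_ne_zero I_ne_zero) (ofReal_ne_zero.mpr hτ)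
  simp only [twoPointInversion, ofReal_add, exp_neg, hsplit]
  rw [phase_pair_shift_sub (exp_ne_zero _), ← hsin, mul_div_cancel_left₀ _ hden]

lemma isBigO {u : ℝ → ℂ} {q : ℝ} (hu : u =O[atTop] fun t => t ^ q) :
    twoPointInversion b τ u =O[atTop] fun t => t ^ q := by
  have hphase {f : ℝ → ℂ} (hf : f =O[atTop] fun t => t ^ q) (θ : ℝ → ℝ) :
      (fun t => f t * exp (-(I * θ t))) =O[atTop] fun t => t ^ q := by
    refine (isBigO_of_le _ fun t => ?_).trans hf
    rw [norm_mul, ← mul_neg, ← ofReal_neg, norm_exp_I_mul_ofReal, mul_one]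
  have hdiff := (hphase (hu.comp_add_const_rpow τ) (fun t => b * t)).sub
    (hphase hu (fun t => b * (t + τ)))
  refine (hdiff.const_mul_left (2 * I * (Real.sin (b * τ) : ℂ))⁻¹).congr_left fun t => ?_
  simp only [twoPointInversion]
  push_cast
  ring

end twoPointInversion

lemma two_mul_re_exp_I_mul (θ : ℝ) (z : ℂ) :
    (2 * (exp (I * θ) * z).re : ℂ) = exp (I * θ) * z + exp (-(I * θ)) * conj z := by
  have hconj : conj (exp (I * θ)) = exp (-(I * θ)) := by
    rw [← exp_conj, map_mul, conj_I, conj_ofReal, neg_mul]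
  rw [← hconj, ← map_mul, add_conj, ofReal_mul, ofReal_ofNat]

theorem twoPoint_phase_retrieval_general
    (b τ : ℝ) (hτ : Real.sin (b * τ) ≠ 0) (p : ℝ) (z : ℂ) (v : ℝ → ℝ)
    (hv : (fun t : ℝ => v t - 2 * (Complex.exp (Complex.I * (b * t)) * z).re)
        =O[atTop] fun t : ℝ => t ^ (-p))
    (w : ℝ → ℂ)
    (hw : ∀ t : ℝ, w t =
      ((v (t + τ) : ℂ) * Complex.exp (-(Complex.I * (b * t)))
        - (v t : ℂ) * Complex.exp (-(Complex.I * (b * (t + τ)))))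
        / (2 * Complex.I * (Real.sin (b * τ) : ℂ))) :
    (fun t : ℝ => w t - z) =O[atTop] fun t : ℝ => t ^ (-p) := by
  set E : ℝ → ℂ := fun t => ((v t - 2 * (exp (I * (b * t)) * z).re : ℝ) : ℂ)
  have hE : E =O[atTop] fun t => t ^ (-p) :=
    (isBigO_of_le _ fun t => (norm_real _).le).trans hv
  have hdecomp : (fun t => (v t : ℂ))
      = (fun t : ℝ => exp (I * (b * t)) * z + exp (-(I * (b * t))) * conj z) + E := by
    funext t
    simp only [E, Pi.add_apply, ofReal_sub, ofReal_mul, ofReal_ofNat]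
    rw [← ofReal_mul, two_mul_re_exp_I_mul]
    ring
  have hw_eq : w = twoPointInversion b τ fun t => v t := funext hw
  refine (twoPointInversion.isBigO (b := b) (τ := τ) hE).congr_left fun t => ?_
  rw [hw_eq, hdecomp, twoPointInversion.add, twoPointInversion.apply_phase_add_conj hτ,
    add_sub_cancel_left]

/-- Two-point phase retrieval: if `v(t) = 2·Re(e^{ibt}·z) + O(t^{-p})` and
`sin(bτ) ≠ 0`, then the explicit two-point inversion
`w(t) = (v(t+τ)e^{-ibt} - v(t)e^{-ib(t+τ)})/(2i·sin(bτ))` recovers `z` up to `O(t^{-p})`. -/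
theorem twoPoint_phase_retrieval
    (b τ : ℝ) (hτ : Real.sin (b * τ) ≠ 0) (p : ℝ) (hp : 0 < p) (z : ℂ) (v : ℝ → ℝ)
    (hv : (fun t : ℝ => v t - 2 * (Complex.exp (Complex.I * (b * t)) * z).re)
        =O[atTop] fun t : ℝ => t ^ (-p))
    (w : ℝ → ℂ)
    (hw : ∀ t : ℝ, w t =
      ((v (t + τ) : ℂ) * Complex.exp (-(Complex.I * (b * t)))
        - (v t : ℂ) * Complex.exp (-(Complex.I * (b * (t + τ)))))
        / (2 * Complex.I * (Real.sin (b * τ) : ℂ))) :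
    (fun t : ℝ => w t - z) =O[atTop] fun t : ℝ => t ^ (-p) :=
  twoPoint_phase_retrieval_general b τ hτ p z v hv w hw
end

section
/- Let n ≥ 1, let σ : Fin n → ℝ be an injective function with σ(i) > 0 for all i, let a : Fin n → ℂ, and let f : ℝ → ℂ satisfy f(s) − Σ_{j : Fin n} a(j)·s^{−j} = O(s^{−n}) as s → ∞. For s > 0 let M(s) be the n×n complex matrix with entries M(s)_{i,j} = (σ(i)·s)^{−j} (rows i, columns j, both indexed by Fin n, with exponent j taken as a natural number). Then M(s) is invertible for every s > 0, and for each j : Fin n, the j-th component of the vector M(s)⁻¹ applied to the vector (f(σ(i)·s))_{i : Fin n} differs from a(j) by O(s^{j−n}) as s → ∞. -/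
open Filter Asymptotics Matrix

/-!
Writing `V` for the Vandermonde matrix in the nodes `σᵢ⁻¹` and `D(s) = diag(s^{-j})`, the
rescaled matrix factors as `M(s) = V * D(s)`, so `M(s)⁻¹ = diag(s^j) * V⁻¹`. The samples are
`f(σᵢ s) = (M(s) a)ᵢ + rᵢ(s)` with remainders `rᵢ(s) = O(s^{-n})`, hence
`(M(s)⁻¹ f(σ s))_j - a_j = s^j (V⁻¹ r(s))_j = O(s^{j-n})`.
-/

section RescaledVandermonde

variable {K : Type*} [Field K] {n : ℕ}

def rescaledVandermonde (x : Fin n → K) (c : K) : Matrix (Fin n) (Fin n) K :=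
  of fun i j => (x i * c) ^ (-(j : ℤ))

theorem rescaledVandermonde_eq_vandermonde_mul_diagonal (x : Fin n → K) (c : K) :
    rescaledVandermonde x c =
      vandermonde (fun i => (x i)⁻¹) * diagonal (fun j : Fin n => c ^ (-(j : ℤ))) := by
  ext i j
  simp [rescaledVandermonde, vandermonde, mul_pow, inv_pow, mul_comm]

theorem isUnit_rescaledVandermonde {x : Fin n → K} (hx : Function.Injective x) {c : K}
    (hc : c ≠ 0) : IsUnit (rescaledVandermonde x c) := by
  rw [isUnit_iff_isUnit_det, rescaledVandermonde_eq_vandermonde_mul_diagonal, det_mul,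
    det_diagonal, isUnit_iff_ne_zero]
  exact mul_ne_zero (det_vandermonde_ne_zero_iff.mpr (inv_injective.comp hx))
    (Finset.prod_ne_zero_iff.mpr fun j _ => zpow_ne_zero _ hc)

theorem inv_rescaledVandermonde (x : Fin n → K) {c : K} (hc : c ≠ 0) :
    (rescaledVandermonde x c)⁻¹ =
      diagonal (fun j : Fin n => c ^ (j : ℕ)) * (vandermonde fun i => (x i)⁻¹)⁻¹ := by
  rw [rescaledVandermonde_eq_vandermonde_mul_diagonal, Matrix.mul_inv_rev]
  congr 1
  refine inv_eq_left_inv ?_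
  rw [diagonal_mul_diagonal, ← diagonal_one]
  congr with j
  simp [_root_.zpow_neg, hc]

theorem inv_rescaledVandermonde_mulVec_sub {x : Fin n → K} (hx : Function.Injective x) {c : K}
    (hc : c ≠ 0) (y a : Fin n → K) (j : Fin n) :
    ((rescaledVandermonde x c)⁻¹ *ᵥ y) j - a j =
      c ^ (j : ℕ) *
        ((vandermonde fun i => (x i)⁻¹)⁻¹ *ᵥ (y - rescaledVandermonde x c *ᵥ a)) j := by
  have hy : y = rescaledVandermonde x c *ᵥ a + (y - rescaledVandermonde x c *ᵥ a) := by abel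
  rw [hy, mulVec_add, mulVec_mulVec, nonsing_inv_mul _
    ((isUnit_iff_isUnit_det _).mp (isUnit_rescaledVandermonde hx hc)),
    one_mulVec, add_sub_cancel_left, inv_rescaledVandermonde x hc, ← mulVec_mulVec,
    Pi.add_apply, add_sub_cancel_left, mulVec_diagonal]

theorem rescaledVandermonde_mulVec_apply (x : Fin n → K) (c : K) (a : Fin n → K) (i : Fin n) :
    (rescaledVandermonde x c *ᵥ a) i = ∑ j, a j * (x i * c) ^ (-(j : ℤ)) := by
  simp [rescaledVandermonde, mulVec, dotProduct, mul_comm]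

end RescaledVandermonde

namespace Asymptotics

theorem IsBigO.comp_const_mul_zpow {E : Type*} [Norm E] {g : ℝ → E} {m : ℤ}
    (hg : g =O[atTop] fun t => t ^ m) {c : ℝ} (hc : 0 < c) :
    (fun s => g (c * s)) =O[atTop] fun s => s ^ m := by
  have h := hg.comp_tendsto (tendsto_id.const_mul_atTop hc)
  simp only [Function.comp_def, id, mul_zpow] at h
  exact h.trans ((isBigO_refl _ _).const_mul_left _)

theorem IsBigO.ofReal_pow_mul {e : ℝ → ℂ} {m : ℤ} (he : e =O[atTop] fun s => s ^ m)
    (k : ℕ) :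
    (fun s : ℝ => (s : ℂ) ^ k * e s) =O[atTop] fun s => s ^ ((k : ℤ) + m) := by
  have hpow : (fun s : ℝ => (s : ℂ) ^ k) =O[atTop] fun s : ℝ => s ^ (k : ℤ) :=
    isBigO_of_le _ fun s => by simp [norm_pow]
  refine (hpow.mul he).congr' EventuallyEq.rfl ?_
  filter_upwards [eventually_ne_atTop 0] with s hs
  rw [zpow_add₀ hs]

theorem isBigO_mulVec_apply {ι κ α R F : Type*} [Fintype ι] [SeminormedRing R] [Norm F]
    {l : Filter α} {g : α → F} (A : Matrix κ ι R) {r : α → ι → R}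
    (hr : ∀ i, (fun s => r s i) =O[l] g) (j : κ) : (fun s => (A *ᵥ r s) j) =O[l] g :=
  IsBigO.fun_sum fun i _ => (hr i).const_mul_left _

end Asymptotics

theorem multipoint_asymptotic_inversion_general
    (n : ℕ) (σ : Fin n → ℝ) (hσinj : Function.Injective σ)
    (hσpos : ∀ i, 0 < σ i) (a : Fin n → ℂ) (f : ℝ → ℂ)
    (hf : (fun s : ℝ => f s - ∑ j : Fin n, a j * (s : ℂ) ^ (-(j : ℤ)))
        =O[atTop] fun s : ℝ => (s : ℝ) ^ (-(n : ℤ)))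
    (M : ℝ → Matrix (Fin n) (Fin n) ℂ)
    (hM : ∀ s : ℝ, ∀ i j : Fin n, M s i j = ((σ i * s : ℝ) : ℂ) ^ (-(j : ℤ))) :
    (∀ s : ℝ, 0 < s → IsUnit (M s)) ∧
    ∀ j : Fin n,
      (fun s : ℝ => (M s)⁻¹.mulVec (fun i : Fin n => f (σ i * s)) j - a j)
        =O[atTop] fun s : ℝ => (s : ℝ) ^ ((j : ℤ) - (n : ℤ)) := by
  set x : Fin n → ℂ := fun i => σ i
  have hx : Function.Injective x := Complex.ofReal_injective.comp hσinj
  have hMx (s : ℝ) : M s = rescaledVandermonde x s := by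
    ext i j
    simp [hM, rescaledVandermonde, x]
  have hsamples (s : ℝ) : (fun i => f (σ i * s)) - rescaledVandermonde x s *ᵥ a =
      fun i => f (σ i * s) - ∑ k : Fin n, a k * ((σ i * s : ℝ) : ℂ) ^ (-(k : ℤ)) := by
    ext i
    simp [rescaledVandermonde_mulVec_apply, x]
  refine ⟨fun s hs => hMx s ▸ isUnit_rescaledVandermonde hx (by exact_mod_cast hs.ne'),
    fun j => ?_⟩
  have hremainder := isBigO_mulVec_apply (vandermonde fun i => (x i)⁻¹)⁻¹
    (fun i => hf.comp_const_mul_zpow (hσpos i)) j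
  refine (hremainder.ofReal_pow_mul j).congr' ?_ (by simp [sub_eq_add_neg])
  filter_upwards [eventually_gt_atTop 0] with s hs
  rw [hMx, inv_rescaledVandermonde_mulVec_sub hx (by exact_mod_cast hs.ne'), hsamples]

/-- Multipoint asymptotic inversion (Lemma 4.1): if
`f(s) = Σ_j a(j)·s^{-j} + O(s^{-n})` as `s → ∞`, then the rescaled Vandermonde matrix
`M(s)_{i,j} = (σᵢ s)^{-j}` is invertible for `s > 0`, and applying its inverse to the
sample vector `(f(σᵢ s))ᵢ` recovers each coefficient `a(j)` up to `O(s^{j-n})`. -/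
theorem multipoint_asymptotic_inversion
    (n : ℕ) (hn : 1 ≤ n) (σ : Fin n → ℝ) (hσinj : Function.Injective σ)
    (hσpos : ∀ i, 0 < σ i) (a : Fin n → ℂ) (f : ℝ → ℂ)
    (hf : (fun s : ℝ => f s - ∑ j : Fin n, a j * (s : ℂ) ^ (-(j : ℤ)))
        =O[atTop] fun s : ℝ => (s : ℝ) ^ (-(n : ℤ)))
    (M : ℝ → Matrix (Fin n) (Fin n) ℂ)
    (hM : ∀ s : ℝ, ∀ i j : Fin n, M s i j = ((σ i * s : ℝ) : ℂ) ^ (-(j : ℤ))) :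
    (∀ s : ℝ, 0 < s → IsUnit (M s)) ∧
    ∀ j : Fin n,
      (fun s : ℝ => (M s)⁻¹.mulVec (fun i : Fin n => f (σ i * s)) j - a j)
        =O[atTop] fun s : ℝ => (s : ℝ) ^ ((j : ℤ) - (n : ℤ)) :=
  multipoint_asymptotic_inversion_general n σ hσinj hσpos a f hf M hM
end

section
/- Let n ≥ 1, let σ : Fin n → ℝ be an injective function with σ(i) > 0 for all i, and let c : Fin n → ℝ with c(i) ≥ 0 for all i. For s > 0 set s_i := σ(i)·s + c(i) and let M(s) be the n×n complex matrix with entries M(s)_{i,j} = s_i^{−j} (rows i, columns j indexed by Fin n, exponent j a natural number). Then there is S > 0 such that M(s) is invertible for all s ≥ S, and for each fixed pair (j, i), the entry (M(s)⁻¹)_{j,i} is O(s^{j}) as s → ∞. -/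
open Filter Asymptotics Topology

private lemma sum_card_Ioi_fin (n : ℕ) :
    ∑ i : Fin n, (Finset.Ioi i).card = ∑ i : Fin n, (i : ℕ) := by
  classical
  have h1 : ∀ i : Fin n, (Finset.Ioi i).card
      = ∑ j : Fin n, if i < j then 1 else 0 := by
    intro i
    rw [← Finset.filter_lt_eq_Ioi, Finset.card_filter]
  have h2 : ∀ j : Fin n, (∑ i : Fin n, if i < j then 1 else 0) = (j : ℕ) := by
    intro j
    rw [← Finset.card_filter, Finset.filter_gt_eq_Iio, Fin.card_Iio]
  simp_rw [h1]
  rw [Finset.sum_comm]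
  simp_rw [h2]

/-- Growth of the inverse rescaled Vandermonde matrix: with sample points
`sᵢ = σᵢ·s + cᵢ` and `M(s)_{i,j} = sᵢ^{-j}`, the matrix `M(s)` is invertible for all
large `s`, and the `(j,i)` entry of `M(s)⁻¹` grows at most like `s^j` as `s → ∞`. -/
theorem inverse_vandermonde_growth
    (n : ℕ) (hn : 1 ≤ n) (σ : Fin n → ℝ) (hσinj : Function.Injective σ)
    (hσpos : ∀ i, 0 < σ i) (c : Fin n → ℝ) (hc : ∀ i, 0 ≤ c i)
    (M : ℝ → Matrix (Fin n) (Fin n) ℂ)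
    (hM : ∀ s : ℝ, ∀ i j : Fin n, M s i j = ((σ i * s + c i : ℝ) : ℂ) ^ (-(j : ℤ))) :
    (∃ S : ℝ, 0 < S ∧ ∀ s : ℝ, S ≤ s → IsUnit (M s)) ∧
    ∀ j i : Fin n,
      (fun s : ℝ => (M s)⁻¹ j i) =O[atTop] fun s : ℝ => (s : ℝ) ^ (j : ℕ) := by
  classical
  set x : ℝ → Fin n → ℂ := fun s i => (((σ i * s + c i : ℝ) : ℂ))⁻¹ with hxdef
  have hMv : ∀ s, M s = Matrix.vandermonde (x s) := by
    intro s; ext i j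
    rw [hM s i j, Matrix.vandermonde_apply]
    simp [hxdef, zpow_neg, inv_pow]
  have hdet : ∀ s, (M s).det = ∏ i : Fin n, ∏ j ∈ Finset.Ioi i, (x s j - x s i) := by
    intro s; rw [hMv s, Matrix.det_vandermonde]
  set P : ℕ := ∑ i : Fin n, (i : ℕ) with hPdef
  have haux : ∀ k : Fin n, Tendsto (fun s : ℝ => (σ k * s + c k)⁻¹ * s) atTop
      (𝓝 (σ k)⁻¹) := by
    intro k
    have hdiv : Tendsto (fun s : ℝ => c k / s) atTop (𝓝 (0:ℝ)) :=
      Tendsto.div_atTop tendsto_const_nhds tendsto_id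
    have h0 : Tendsto (fun s : ℝ => σ k + c k / s) atTop (𝓝 (σ k)) := by
      simpa using (tendsto_const_nhds (x := σ k)).add hdiv
    have h1 : Tendsto (fun s : ℝ => (σ k + c k / s)⁻¹) atTop (𝓝 (σ k)⁻¹) :=
      h0.inv₀ (ne_of_gt (hσpos k))
    refine h1.congr' ?_
    filter_upwards [eventually_gt_atTop (0:ℝ)] with s hs
    have hsne : s ≠ 0 := ne_of_gt hs
    have : σ k + c k / s = (σ k * s + c k) / s := by field_simp
    rw [this, inv_div, div_eq_mul_inv, mul_comm]
  have hlim : ∀ i j : Fin n, Tendsto (fun s : ℝ => (x s j - x s i) * (s : ℂ)) atTop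
      (𝓝 ((((σ j)⁻¹ - (σ i)⁻¹ : ℝ) : ℂ))) := by
    intro i j
    have hr : Tendsto (fun s : ℝ => (σ j * s + c j)⁻¹ * s - (σ i * s + c i)⁻¹ * s) atTop
        (𝓝 ((σ j)⁻¹ - (σ i)⁻¹)) := (haux j).sub (haux i)
    have h2 := (Complex.continuous_ofReal.tendsto _).comp hr
    refine h2.congr fun s => ?_
    simp only [hxdef, Function.comp_apply]
    push_cast
    ring
  set L : ℂ := ∏ i : Fin n, ∏ j ∈ Finset.Ioi i, (((σ j)⁻¹ - (σ i)⁻¹ : ℝ) : ℂ) with hLdef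
  have hL0 : L ≠ 0 := by
    rw [hLdef]
    refine Finset.prod_ne_zero_iff.mpr fun i _ => Finset.prod_ne_zero_iff.mpr fun j hj => ?_
    have hij : i ≠ j := (Finset.mem_Ioi.mp hj).ne
    simp only [ne_eq, Complex.ofReal_eq_zero, sub_eq_zero]
    intro h
    exact hij (hσinj (inv_injective h)).symm
  have hDP : ∀ s : ℝ, ∏ i : Fin n, ∏ j ∈ Finset.Ioi i, ((x s j - x s i) * (s:ℂ))
      = (M s).det * (s : ℂ) ^ P := by
    intro s
    rw [hdet s]
    simp_rw [Finset.prod_mul_distrib, Finset.prod_const]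
    rw [Finset.prod_pow_eq_pow_sum, sum_card_Ioi_fin]
  have hDtend : Tendsto (fun s : ℝ => (M s).det * (s:ℂ)^P) atTop (𝓝 L) := by
    have h := tendsto_finset_prod (Finset.univ : Finset (Fin n))
      (fun i (_ : i ∈ Finset.univ) =>
        tendsto_finset_prod (Finset.Ioi i) fun j (_ : j ∈ Finset.Ioi i) => hlim i j)
    exact h.congr fun s => hDP s
  have hDne : ∀ᶠ s in atTop, (M s).det ≠ 0 := by
    filter_upwards [hDtend.eventually_ne hL0] with s hs
    exact left_ne_zero_of_mul hs
  constructor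
  · obtain ⟨a, ha⟩ := eventually_atTop.mp hDne
    refine ⟨max a 1, lt_of_lt_of_le one_pos (le_max_right a 1), fun s hs => ?_⟩
    rw [Matrix.isUnit_iff_isUnit_det]
    exact isUnit_iff_ne_zero.mpr (ha s (le_trans (le_max_left a 1) hs))
  · intro j i
    have hDinv : (fun s : ℝ => ((M s).det)⁻¹) =O[atTop] fun s : ℝ => (s:ℝ) ^ P := by
      have h1 : Tendsto (fun s : ℝ => ((M s).det * (s:ℂ)^P)⁻¹) atTop (𝓝 L⁻¹) :=
        hDtend.inv₀ hL0
      have h2 : (fun s : ℝ => ((M s).det * (s:ℂ)^P)⁻¹) =O[atTop] (fun _ : ℝ => (1:ℝ)) :=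
        h1.isBigO_one ℝ
      have h3 : (fun s : ℝ => ((s:ℂ))^P) =O[atTop] fun s : ℝ => (s:ℝ)^P := by
        refine isBigO_of_le _ fun s => ?_
        simp [norm_pow, abs_pow]
      refine (h2.mul h3).congr' ?_ ?_
      · filter_upwards [hDne, eventually_gt_atTop (0:ℝ)] with s h0 hs
        have ht : ((s:ℂ))^P ≠ 0 := pow_ne_zero _ (by exact_mod_cast ne_of_gt hs)
        rw [mul_inv, mul_assoc, inv_mul_cancel₀ ht, mul_one]
      · filter_upwards with s
        rw [one_mul]
    set K : ℕ := ∑ q ∈ Finset.univ.erase j, ((q : Fin n) : ℕ) with hKdef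
    have hPK : ((j:ℕ)) + K = P := by
      rw [hKdef, hPdef]
      exact Finset.add_sum_erase _ _ (Finset.mem_univ j)
    set Cb : ℝ := ∑ k : Fin n, (σ k)⁻¹ with hCb
    have hCbpos : 0 < Cb :=
      Finset.sum_pos (fun k _ => inv_pos.mpr (hσpos k)) ⟨⟨0, hn⟩, Finset.mem_univ _⟩
    have hxle : ∀ᶠ s : ℝ in atTop, ∀ k, ‖x s k‖ ≤ Cb / s := by
      filter_upwards [eventually_gt_atTop (0:ℝ)] with s hs k
      have hpos : 0 < σ k * s + c k :=
        add_pos_of_pos_of_nonneg (mul_pos (hσpos k) hs) (hc k)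
      have hnorm : ‖x s k‖ = (σ k * s + c k)⁻¹ := by
        rw [hxdef]
        simp only [norm_inv, Complex.norm_real, Real.norm_eq_abs]
        rw [abs_of_pos hpos]
      rw [hnorm]
      have h1 : (σ k * s + c k)⁻¹ ≤ (σ k * s)⁻¹ :=
        inv_anti₀ (mul_pos (hσpos k) hs) (le_add_of_nonneg_right (hc k))
      have h2 : (σ k * s)⁻¹ = (σ k)⁻¹ / s := by
        rw [mul_inv, div_eq_mul_inv]
      have h3 : (σ k)⁻¹ ≤ Cb :=
        Finset.single_le_sum (fun k _ => le_of_lt (inv_pos.mpr (hσpos k))) (Finset.mem_univ k)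
      calc (σ k * s + c k)⁻¹ ≤ (σ k * s)⁻¹ := h1
        _ = (σ k)⁻¹ / s := h2
        _ ≤ Cb / s := by gcongr
    have hAdj : (fun s : ℝ => (M s).adjugate j i) =O[atTop]
        fun s : ℝ => (s:ℝ) ^ (-(K:ℤ)) := by
      rw [isBigO_iff]
      refine ⟨(Nat.factorial n : ℝ) * Cb ^ K, ?_⟩
      filter_upwards [hxle, eventually_ge_atTop (1:ℝ)] with s hxs hs1
      have hs : (0:ℝ) < s := lt_of_lt_of_le one_pos hs1
      rw [Matrix.adjugate_apply]
      set B := (M s).updateRow i (Pi.single j 1) with hB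
      have hterm : ∀ τ : Equiv.Perm (Fin n), ‖∏ q : Fin n, B (τ q) q‖ ≤ (Cb / s) ^ K := by
        intro τ
        by_cases hτ : τ j = i
        · have h1 : ∀ q : Fin n, q ≠ j → B (τ q) q = x s (τ q) ^ (q:ℕ) := by
            intro q hq
            have hne : τ q ≠ i := fun h => hq (τ.injective (h.trans hτ.symm))
            rw [hB, Matrix.updateRow_ne hne, hMv s, Matrix.vandermonde_apply]
          have h2 : B (τ j) j = 1 := by
            rw [hB, hτ, Matrix.updateRow_self, Pi.single_eq_same]
          have hprod : ∏ q : Fin n, B (τ q) q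
              = ∏ q ∈ Finset.univ.erase j, x s (τ q) ^ (q:ℕ) := by
            rw [← Finset.mul_prod_erase Finset.univ _ (Finset.mem_univ j), h2, one_mul]
            exact Finset.prod_congr rfl fun q hq => h1 q (Finset.ne_of_mem_erase hq)
          rw [hprod, norm_prod]
          calc ∏ q ∈ Finset.univ.erase j, ‖x s (τ q) ^ (q:ℕ)‖
              ≤ ∏ q ∈ Finset.univ.erase j, (Cb / s) ^ (q:ℕ) := by
                refine Finset.prod_le_prod (fun q _ => norm_nonneg _) fun q _ => ?_
                rw [norm_pow]
                exact pow_le_pow_left₀ (norm_nonneg _) (hxs (τ q)) _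
            _ = (Cb / s) ^ K := by rw [Finset.prod_pow_eq_pow_sum]
        · have hq : τ (τ.symm i) = i := τ.apply_symm_apply i
          have hqj : τ.symm i ≠ j := fun h => hτ (by rw [← h, hq])
          have hzero : B (τ (τ.symm i)) (τ.symm i) = 0 := by
            rw [hq, hB, Matrix.updateRow_self, Pi.single_eq_of_ne hqj]
          rw [show (∏ q : Fin n, B (τ q) q) = 0 from
            Finset.prod_eq_zero (Finset.mem_univ (τ.symm i)) hzero, norm_zero]
          positivity
      rw [Matrix.det_apply]
      have hsgn : ∀ τ : Equiv.Perm (Fin n),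
          ‖Equiv.Perm.sign τ • ∏ q : Fin n, B (τ q) q‖ = ‖∏ q : Fin n, B (τ q) q‖ := by
        intro τ
        rcases Int.units_eq_one_or (Equiv.Perm.sign τ) with h | h <;> rw [h] <;> simp
      calc ‖∑ τ : Equiv.Perm (Fin n), Equiv.Perm.sign τ • ∏ q : Fin n, B (τ q) q‖
          ≤ ∑ τ : Equiv.Perm (Fin n), ‖Equiv.Perm.sign τ • ∏ q : Fin n, B (τ q) q‖ :=
            norm_sum_le _ _
        _ ≤ ∑ _τ : Equiv.Perm (Fin n), (Cb / s) ^ K := by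
            refine Finset.sum_le_sum fun τ _ => ?_
            rw [hsgn τ]; exact hterm τ
        _ = (Nat.factorial n : ℝ) * (Cb / s) ^ K := by
            rw [Finset.sum_const, Finset.card_univ, Fintype.card_perm, Fintype.card_fin, nsmul_eq_mul]
        _ = (Nat.factorial n : ℝ) * Cb ^ K * ‖(s:ℝ) ^ (-(K:ℤ))‖ := by
            rw [div_pow, Real.norm_eq_abs, abs_of_pos (zpow_pos hs _)]
            rw [zpow_neg, zpow_natCast, div_eq_mul_inv, mul_assoc]
    have hEq : ∀ s : ℝ, (M s)⁻¹ j i = ((M s).det)⁻¹ * (M s).adjugate j i := by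
      intro s
      rw [Matrix.inv_def, Matrix.smul_apply, Ring.inverse_eq_inv, smul_eq_mul]
    have h5 := hDinv.mul hAdj
    rw [show (fun s : ℝ => ((M s).det)⁻¹ * (M s).adjugate j i)
        = fun s : ℝ => (M s)⁻¹ j i from funext fun s => (hEq s).symm] at h5
    refine h5.congr' EventuallyEq.rfl ?_
    filter_upwards [eventually_gt_atTop (0:ℝ)] with s hs
    rw [← hPK, pow_add, zpow_neg, zpow_natCast, mul_assoc,
      mul_inv_cancel₀ (pow_ne_zero _ (ne_of_gt hs)), mul_one]
end

section
/- Let n ≥ 1, let b be a real number, and let r₁, r₂ be real numbers with sin(b·(r₁ − r₂)) ≠ 0. For a vector f = (f₁, …, f_n) of complex numbers and a real number r, define F_j(f, r) := e^{ibr}·f_j + e^{−ibr}·conj(f_j) + Σ_{ℓ=1}^{j−1} f_ℓ·conj(f_{j−ℓ}) for j = 1, …, n. If f and g are two vectors of complex numbers such that F_j(f, r₁) = F_j(g, r₁) and F_j(f, r₂) = F_j(g, r₂) for all j = 1, …, n, then f_j = g_j for all j = 1, …, n. -/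
open Finset

private lemma phase_key (b r₁ r₂ : ℝ) (hsin : Real.sin (b * (r₁ - r₂)) ≠ 0) (d : ℂ)
    (h1 : Complex.exp (Complex.I * (b * r₁)) * d
        + Complex.exp (-(Complex.I * (b * r₁))) * starRingEnd ℂ d = 0)
    (h2 : Complex.exp (Complex.I * (b * r₂)) * d
        + Complex.exp (-(Complex.I * (b * r₂))) * starRingEnd ℂ d = 0) : d = 0 := by
  have e1 : Complex.exp (-(Complex.I * (b * r₁))) * Complex.exp (Complex.I * (b * r₂))
      = Complex.exp (Complex.I * ((b : ℂ) * ((r₂ : ℂ) - (r₁ : ℂ)))) := by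
    rw [← Complex.exp_add]; congr 1; ring
  have e2 : Complex.exp (-(Complex.I * (b * r₂))) * Complex.exp (Complex.I * (b * r₁))
      = Complex.exp (-(Complex.I * ((b : ℂ) * ((r₂ : ℂ) - (r₁ : ℂ))))) := by
    rw [← Complex.exp_add]; congr 1; ring
  have h3 : starRingEnd ℂ d * (Complex.exp (Complex.I * ((b : ℂ) * ((r₂ : ℂ) - (r₁ : ℂ))))
      - Complex.exp (-(Complex.I * ((b : ℂ) * ((r₂ : ℂ) - (r₁ : ℂ)))))) = 0 := by
    linear_combination Complex.exp (Complex.I * (b * r₂)) * h1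
      - Complex.exp (Complex.I * (b * r₁)) * h2 - starRingEnd ℂ d * e1 + starRingEnd ℂ d * e2
  have hfac : Complex.exp (Complex.I * ((b : ℂ) * ((r₂ : ℂ) - (r₁ : ℂ))))
      - Complex.exp (-(Complex.I * ((b : ℂ) * ((r₂ : ℂ) - (r₁ : ℂ)))))
      = 2 * Complex.I * Complex.sin ((b : ℂ) * ((r₂ : ℂ) - (r₁ : ℂ))) := by
    rw [Complex.sin]
    have : Complex.I * Complex.I = -1 := Complex.I_mul_I
    field_simp
    ring_nf
    rw [Complex.I_sq]
    ring
  have hsin' : Complex.sin ((b : ℂ) * ((r₂ : ℂ) - (r₁ : ℂ))) ≠ 0 := by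
    have : ((Real.sin (b * (r₂ - r₁)) : ℝ) : ℂ) = Complex.sin ((b : ℂ) * ((r₂ : ℂ) - (r₁ : ℂ))) := by
      push_cast [Complex.ofReal_sin]; ring_nf
    rw [← this]
    simp only [ne_eq, Complex.ofReal_eq_zero]
    intro h
    apply hsin
    have : b * (r₁ - r₂) = -(b * (r₂ - r₁)) := by ring
    rw [this, Real.sin_neg, h, neg_zero]
  have hc0 : starRingEnd ℂ d = 0 := by
    rcases mul_eq_zero.mp h3 with h | h
    · exact h
    · exfalso
      rw [hfac] at h
      exact hsin' (by simpa using mul_eq_zero.mp h |>.resolve_left (by simp [Complex.I_ne_zero]))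
  have := congrArg (starRingEnd ℂ) hc0
  simpa using this

/-- Recursive injectivity of the coefficients
`F_j(f,r) = e^{ibr} f_j + e^{-ibr} conj(f_j) + Σ_{ℓ=1}^{j-1} f_ℓ conj(f_{j-ℓ})`:
if `sin(b(r₁ - r₂)) ≠ 0` and two coefficient vectors produce the same values
`F_j(·, r₁)` and `F_j(·, r₂)` for `j = 1, …, n`, then the vectors coincide. -/
theorem phase_retrieval_coefficients_injective
    (n : ℕ) (hn : 1 ≤ n) (b r₁ r₂ : ℝ) (hsin : Real.sin (b * (r₁ - r₂)) ≠ 0)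
    (F : (ℕ → ℂ) → ℕ → ℝ → ℂ)
    (hF : ∀ (f : ℕ → ℂ) (j : ℕ) (r : ℝ),
      F f j r = Complex.exp (Complex.I * (b * r)) * f j
        + Complex.exp (-(Complex.I * (b * r))) * starRingEnd ℂ (f j)
        + ∑ ℓ ∈ Finset.Ico 1 j, f ℓ * starRingEnd ℂ (f (j - ℓ)))
    (f g : ℕ → ℂ)
    (h₁ : ∀ j ∈ Finset.Icc 1 n, F f j r₁ = F g j r₁)
    (h₂ : ∀ j ∈ Finset.Icc 1 n, F f j r₂ = F g j r₂) :
    ∀ j ∈ Finset.Icc 1 n, f j = g j := by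
  intro j
  induction j using Nat.strong_induction_on with
  | _ j ih =>
    intro hj
    rw [Finset.mem_Icc] at hj
    have hsum : ∑ ℓ ∈ Finset.Ico 1 j, f ℓ * starRingEnd ℂ (f (j - ℓ))
        = ∑ ℓ ∈ Finset.Ico 1 j, g ℓ * starRingEnd ℂ (g (j - ℓ)) := by
      refine Finset.sum_congr rfl fun ℓ hℓ => ?_
      rw [Finset.mem_Ico] at hℓ
      have e1 : f ℓ = g ℓ := ih ℓ hℓ.2 (Finset.mem_Icc.mpr ⟨hℓ.1, by omega⟩)
      have e2 : f (j - ℓ) = g (j - ℓ) := ih (j - ℓ) (by omega) (Finset.mem_Icc.mpr ⟨by omega, by omega⟩)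
      rw [e1, e2]
    have H1 := h₁ j (Finset.mem_Icc.mpr hj)
    have H2 := h₂ j (Finset.mem_Icc.mpr hj)
    rw [hF, hF, hsum] at H1 H2
    have key := phase_key b r₁ r₂ hsin (f j - g j) ?_ ?_
    · exact sub_eq_zero.mp key
    · rw [map_sub]; linear_combination H1
    · rw [map_sub]; linear_combination H2
end

section
/- Let n ≥ 1, let b be a nonzero real number, and let a, c, d : Fin n → ℂ (indexed j = 1, …, n). If the function t ↦ Σ_{j=1}^{n} (a_j·e^{ibt} + c_j·e^{−ibt} + d_j)·t^{1−j} is o(t^{1−n}) as t → ∞, then a_j = c_j = d_j = 0 for all j = 1, …, n. -/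
/-!
The combination is `o(1)`, and every term but the leading one is a bounded function times a
negative power of `t`, so the leading coefficient function `a₁ e^{ibt} + c₁ e^{-ibt} + d₁` tends
to `0`. Being periodic (as `b ≠ 0`), it vanishes identically, and evaluating at the phases `0`,
`π`, `π / 2` gives `a₁ = c₁ = d₁ = 0`. Dropping the leading term and multiplying by `t` lowers
`n` by one.
-/

open Filter Asymptotics Topology Function Real

theorem Function.Periodic.eq_of_tendsto_atTop {X : Type*} [TopologicalSpace X] [T2Space X]
    {f : ℝ → X} {p : ℝ} (hf : Periodic f p) (hp : p ≠ 0) {y : X}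
    (h : Tendsto f atTop (𝓝 y)) (x : ℝ) : f x = y := by
  wlog hp_pos : 0 < p generalizing p
  · exact this hf.neg (neg_ne_zero.mpr hp) (by linarith [hp.lt_or_gt.resolve_right hp_pos])
  have hu : Tendsto (fun k : ℕ => x + k * p) atTop atTop :=
    tendsto_atTop_add_const_left _ _ (tendsto_natCast_atTop_atTop.atTop_mul_const hp_pos)
  exact tendsto_nhds_unique tendsto_const_nhds
    ((h.comp hu).congr fun k => (hf.nat_mul k) x)

noncomputable def trigPoly (a c d : ℂ) (θ : ℝ) : ℂ :=
  a * Complex.exp (Complex.I * θ) + c * Complex.exp (-(Complex.I * θ)) + d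

theorem trigPoly_periodic (a c d : ℂ) : Periodic (trigPoly a c d) (2 * π) := by
  intro θ
  have h : Complex.I * ((θ + 2 * π : ℝ) : ℂ) = Complex.I * θ + 2 * π * Complex.I := by
    push_cast; ring
  rw [trigPoly, trigPoly, h, neg_add, Complex.exp_add, Complex.exp_add, Complex.exp_two_pi_mul_I,
    Complex.exp_neg (2 * π * Complex.I), Complex.exp_two_pi_mul_I, inv_one, mul_one, mul_one]

theorem norm_trigPoly_le (a c d : ℂ) (θ : ℝ) : ‖trigPoly a c d θ‖ ≤ ‖a‖ + ‖c‖ + ‖d‖ := by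
  have h₁ := Complex.norm_exp_I_mul_ofReal θ
  have h₂ : ‖Complex.exp (-(Complex.I * θ))‖ = 1 := by
    rw [← mul_neg, ← Complex.ofReal_neg, Complex.norm_exp_I_mul_ofReal]
  calc ‖trigPoly a c d θ‖
      ≤ ‖a * Complex.exp (Complex.I * θ)‖ + ‖c * Complex.exp (-(Complex.I * θ))‖ + ‖d‖ :=
        norm_add₃_le
    _ = ‖a‖ + ‖c‖ + ‖d‖ := by rw [norm_mul, norm_mul, h₁, h₂, mul_one, mul_one]

theorem eq_zero_of_trigPoly_eq_zero {a c d : ℂ} (h : ∀ θ, trigPoly a c d θ = 0) :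
    a = 0 ∧ c = 0 ∧ d = 0 := by
  have hcos_sin (θ : ℝ) :
      (a + c) * Complex.cos θ + (a - c) * Complex.sin θ * Complex.I + d = 0 := by
    rw [← h θ, trigPoly, mul_comm Complex.I, Complex.exp_mul_I, ← neg_mul, Complex.exp_mul_I,
      Complex.cos_neg, Complex.sin_neg]
    ring
  have h₀ := hcos_sin 0
  have h₁ := hcos_sin π
  have h₂ := hcos_sin (π / 2)
  push_cast at h₀ h₁ h₂
  simp only [Complex.cos_zero, Complex.sin_zero, Complex.cos_pi, Complex.sin_pi,
    Complex.cos_pi_div_two, Complex.sin_pi_div_two] at h₀ h₁ h₂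
  have hd : d = 0 := by linear_combination (h₀ + h₁) / 2
  have hac : a - c = 0 := by
    have : (a - c) * Complex.I = 0 := by linear_combination h₂ - hd
    exact (mul_eq_zero.mp this).resolve_right Complex.I_ne_zero
  exact ⟨by linear_combination (h₀ - hd + hac) / 2, by linear_combination (h₀ - hd - hac) / 2, hd⟩

theorem eq_zero_of_tendsto_trigPoly {a c d : ℂ} {b : ℝ} (hb : b ≠ 0)
    (h : Tendsto (fun t => trigPoly a c d (b * t)) atTop (𝓝 0)) : a = 0 ∧ c = 0 ∧ d = 0 := by
  refine eq_zero_of_trigPoly_eq_zero fun θ => ?_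
  have hper := (trigPoly_periodic a c d).const_mul b
  simpa [mul_div_cancel₀ θ hb] using
    hper.eq_of_tendsto_atTop (mul_ne_zero (inv_ne_zero hb) (by positivity)) h (θ / b)

theorem isBigO_rpow_one_of_nonpos {p : ℝ} (hp : p ≤ 0) :
    (fun t : ℝ => t ^ p) =O[atTop] (fun _ => (1 : ℝ)) := by
  refine IsBigO.of_bound 1 ?_
  filter_upwards [eventually_ge_atTop 1] with t ht
  rw [norm_one, mul_one, norm_of_nonneg (rpow_nonneg (by linarith) p)]
  exact rpow_le_one_of_one_le_of_nonpos ht hp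

section RpowExpansion

variable {E : Type*} [NormedAddCommGroup E] [NormedSpace ℝ E]

theorem tendsto_rpow_smul_of_isBigO_one {g : ℝ → E} (hg : g =O[atTop] (fun _ => (1 : ℝ)))
    {p : ℝ} (hp : p < 0) : Tendsto (fun t => t ^ p • g t) atTop (𝓝 0) := by
  have hO : (fun t => t ^ p • g t) =O[atTop] (fun t => t ^ p • (1 : ℝ)) :=
    (isBigO_refl _ _).smul hg
  simpa using hO.trans_tendsto (by simpa using tendsto_rpow_neg_atTop (neg_pos.mpr hp))

theorem tendsto_head_of_tendsto_sum_rpow_smul {m : ℕ} {f : Fin (m + 1) → ℝ → E}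
    (hf : ∀ j, f j =O[atTop] (fun _ => (1 : ℝ)))
    (h : Tendsto (fun t => ∑ j : Fin (m + 1), t ^ (-((j : ℕ) : ℝ)) • f j t) atTop (𝓝 0)) :
    Tendsto (f 0) atTop (𝓝 0) := by
  have htail : Tendsto (fun t => ∑ j : Fin m, t ^ (-((j.succ : ℕ) : ℝ)) • f j.succ t)
      atTop (𝓝 0) := by
    simpa using tendsto_finsetSum Finset.univ fun (j : Fin m) _ =>
      tendsto_rpow_smul_of_isBigO_one (p := -((j.succ : ℕ) : ℝ)) (hf j.succ)
        (neg_lt_zero.mpr (Nat.cast_pos.mpr j.succ_pos))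
  have hsplit : f 0 = fun t => ∑ j : Fin (m + 1), t ^ (-((j : ℕ) : ℝ)) • f j t
      - ∑ j : Fin m, t ^ (-((j.succ : ℕ) : ℝ)) • f j.succ t := by
    funext t
    simp only [Fin.sum_univ_succ, Fin.val_zero, Nat.cast_zero, neg_zero, rpow_zero, one_smul,
      add_sub_cancel_right]
  simpa [hsplit] using h.sub htail

theorem isLittleO_sum_tail_of_head_eventuallyEq_zero {m : ℕ} {f : Fin (m + 1) → ℝ → E}
    (h0 : f 0 =ᶠ[atTop] 0) {q : ℝ}
    (h : (fun t => ∑ j : Fin (m + 1), t ^ (-((j : ℕ) : ℝ)) • f j t) =o[atTop] (fun t => t ^ q)) :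
    (fun t => ∑ j : Fin m, t ^ (-((j : ℕ) : ℝ)) • f j.succ t) =o[atTop]
      (fun t => t ^ (q + 1)) := by
  have hmul : (fun t => t • ∑ j : Fin (m + 1), t ^ (-((j : ℕ) : ℝ)) • f j t) =o[atTop]
      (fun t => t * t ^ q) :=
    (isBigO_refl (fun t : ℝ => t) atTop).smul_isLittleO h
  refine hmul.congr' ?_ ?_
  · filter_upwards [h0, eventually_gt_atTop 0] with t ht0 ht
    have hpow (k : ℕ) : t * t ^ (-((k + 1 : ℕ) : ℝ)) = t ^ (-(k : ℝ)) := by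
      rw [mul_comm, ← rpow_add_one ht.ne']
      push_cast; ring_nf
    simp only [Fin.sum_univ_succ, ht0, Pi.zero_apply, smul_zero, zero_add, Finset.smul_sum,
      smul_smul, Fin.val_succ, hpow]
  · filter_upwards [eventually_gt_atTop 0] with t ht
    rw [rpow_add ht, rpow_one, mul_comm]

theorem eventuallyEq_zero_of_sum_rpow_smul_isLittleO {n : ℕ} {f : Fin n → ℝ → E}
    (hbdd : ∀ j, f j =O[atTop] (fun _ => (1 : ℝ)))
    (hrigid : ∀ j, Tendsto (f j) atTop (𝓝 0) → f j =ᶠ[atTop] 0)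
    (h : (fun t => ∑ j : Fin n, t ^ (-((j : ℕ) : ℝ)) • f j t) =o[atTop]
      (fun t => t ^ (1 - (n : ℝ)))) :
    ∀ j, f j =ᶠ[atTop] 0 := by
  induction n with
  | zero => exact fun j => j.elim0
  | succ m ih =>
    have hsum := (isLittleO_one_iff ℝ).mp
      (h.trans_isBigO (isBigO_rpow_one_of_nonpos (by push_cast; linarith)))
    have h0 := hrigid 0 (tendsto_head_of_tendsto_sum_rpow_smul hbdd hsum)
    have htail := isLittleO_sum_tail_of_head_eventuallyEq_zero h0 h
    refine Fin.cases h0 (ih (fun j => hbdd j.succ) (fun j => hrigid j.succ) ?_)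
    convert htail using 3
    push_cast; ring

end RpowExpansion

theorem asymptotic_linear_independence_osc_general
    (n : ℕ) (b : ℝ) (hb : b ≠ 0) (a c d : Fin n → ℂ)
    (h : (fun t : ℝ => ∑ j : Fin n,
          (a j * Complex.exp (Complex.I * (b * t))
            + c j * Complex.exp (-(Complex.I * (b * t))) + d j)
          * ((t ^ ((1 : ℝ) - ((j : ℕ) + 1)) : ℝ) : ℂ))
        =o[atTop] fun t : ℝ => t ^ ((1 : ℝ) - n)) :
    ∀ j : Fin n, a j = 0 ∧ c j = 0 ∧ d j = 0 := by
  set f : Fin n → ℝ → ℂ := fun j t => trigPoly (a j) (c j) (d j) (b * t)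
  have hsum : (fun t : ℝ => ∑ j : Fin n, t ^ (-((j : ℕ) : ℝ)) • f j t) =o[atTop]
      fun t : ℝ => t ^ (1 - (n : ℝ)) := by
    refine h.congr_left fun t => Finset.sum_congr rfl fun j _ => ?_
    rw [Complex.real_smul, mul_comm, show (1 : ℝ) - ((j : ℕ) + 1) = -((j : ℕ) : ℝ) by ring]
    simp only [f, trigPoly, Complex.ofReal_mul]
  have hbdd (j : Fin n) : f j =O[atTop] fun _ => (1 : ℝ) :=
    IsBigO.of_bound _ (Eventually.of_forall fun t => by
      simpa using norm_trigPoly_le (a j) (c j) (d j) (b * t))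
  have hrigid (j : Fin n) (hj : Tendsto (f j) atTop (𝓝 0)) : f j =ᶠ[atTop] 0 := by
    obtain ⟨ha, hc, hd⟩ := eq_zero_of_tendsto_trigPoly hb hj
    exact Eventually.of_forall fun t => by simp [f, trigPoly, ha, hc, hd]
  have hzero := eventuallyEq_zero_of_sum_rpow_smul_isLittleO hbdd hrigid hsum
  exact fun j => eq_zero_of_tendsto_trigPoly hb (tendsto_const_nhds.congr' (hzero j).symm)

/-- Asymptotic linear independence of `e^{ibt}·t^{1-j}`, `e^{-ibt}·t^{1-j}`, `t^{1-j}`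
for `j = 1, …, n` (here `a j`, `c j`, `d j` with `j : Fin n` denote the coefficients of
order `j+1`): if the combination is `o(t^{1-n})` as `t → ∞`, all coefficients vanish. -/
theorem asymptotic_linear_independence_osc
    (n : ℕ) (hn : 1 ≤ n) (b : ℝ) (hb : b ≠ 0) (a c d : Fin n → ℂ)
    (h : (fun t : ℝ => ∑ j : Fin n,
          (a j * Complex.exp (Complex.I * (b * t))
            + c j * Complex.exp (-(Complex.I * (b * t))) + d j)
          * ((t ^ ((1 : ℝ) - ((j : ℕ) + 1)) : ℝ) : ℂ))
        =o[atTop] fun t : ℝ => t ^ ((1 : ℝ) - n)) :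
    ∀ j : Fin n, a j = 0 ∧ c j = 0 ∧ d j = 0 :=
  asymptotic_linear_independence_osc_general n b hb a c d h
end

section
/- Let b be a nonzero real number and let ε : ℝ → ℂ be a continuous function with ε(t) → 0 as t → +∞. Then for every δ > 0 there exists R > 0 such that for every r ≥ R there exist t ∈ (r − δ, r + δ) and ρ > 0 with e^{ibt} + ε(t) = ρ·e^{ibr}. -/
/-!
After rotating by `e^{-ibr}` and substituting `x = b (t - r)`, the claim is that the perturbed
arc `x ↦ e^{ix} + η(x)`, `|x| ≤ θ`, meets the positive real axis. If `‖η‖` stays below both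
`sin θ` and `cos θ`, its imaginary part changes sign between `-θ` and `θ`, so it vanishes
somewhere by the intermediate value theorem, and the real part is at least
`cos θ - ‖η‖ > 0` on the whole arc.
-/

open Filter Set Real

theorem exists_exp_mul_I_add_eq_ofReal_pos {θ : ℝ} (hθ₀ : 0 ≤ θ) (hθπ : θ ≤ π) {η : ℝ → ℂ}
    (hcont : ContinuousOn η (Icc (-θ) θ))
    (hη : ∀ x ∈ Icc (-θ) θ, ‖η x‖ < min (sin θ) (cos θ)) :
    ∃ x ∈ Icc (-θ) θ, ∃ ρ : ℝ, 0 < ρ ∧ Complex.exp (x * Complex.I) + η x = ρ := by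
  set γ : ℝ → ℂ := fun x => Complex.exp (x * Complex.I) + η x
  have hγ_re (x : ℝ) : (γ x).re = cos x + (η x).re := by simp [γ, Complex.exp_ofReal_mul_I_re]
  have hγ_im (x : ℝ) : (γ x).im = sin x + (η x).im := by simp [γ, Complex.exp_ofReal_mul_I_im]
  have hθ_mem : -θ ∈ Icc (-θ) θ ∧ θ ∈ Icc (-θ) θ :=
    ⟨left_mem_Icc.mpr (by linarith), right_mem_Icc.mpr (by linarith)⟩
  have him_lo : (γ (-θ)).im ≤ 0 := by
    have := (abs_le.mp ((Complex.abs_im_le_norm _).trans (hη _ hθ_mem.1).le)).2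
    rw [hγ_im, sin_neg]
    linarith [min_le_left (sin θ) (cos θ)]
  have him_hi : 0 ≤ (γ θ).im := by
    have := (abs_le.mp ((Complex.abs_im_le_norm _).trans (hη _ hθ_mem.2).le)).1
    rw [hγ_im]
    linarith [min_le_left (sin θ) (cos θ)]
  have hγ_cont : ContinuousOn (fun x => (γ x).im) (Icc (-θ) θ) :=
    Complex.continuous_im.comp_continuousOn
      ((Continuous.continuousOn (by fun_prop)).add hcont)
  obtain ⟨x, hx, hx_im⟩ :=
    intermediate_value_Icc (by linarith) hγ_cont ⟨him_lo, him_hi⟩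
  have hcos : cos θ ≤ cos x := by
    rw [← cos_abs x]
    exact cos_le_cos_of_nonneg_of_le_pi (abs_nonneg x) hθπ (abs_le.mpr hx)
  have hx_re : 0 < (γ x).re := by
    have := (abs_lt.mp ((Complex.abs_re_le_norm _).trans_lt (hη x hx))).1
    rw [hγ_re]
    linarith [min_le_right (sin θ) (cos θ)]
  exact ⟨x, hx, (γ x).re, hx_re,
    Complex.ext (Complex.ofReal_re _).symm (hx_im.trans (Complex.ofReal_im _).symm)⟩

theorem exp_mul_I_add_eq_of_rotate {b r x ρ : ℝ} (hb : b ≠ 0) {w : ℂ}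
    (h : Complex.exp (x * Complex.I) + w * Complex.exp (↑(-(b * r)) * Complex.I) = ρ) :
    Complex.exp (Complex.I * (b * ↑(r + x / b))) + w = ρ * Complex.exp (Complex.I * (b * r)) := by
  have hrot : Complex.exp (↑(-(b * r)) * Complex.I) * Complex.exp (Complex.I * (b * r)) = 1 := by
    rw [← Complex.exp_add, ← Complex.exp_zero]
    push_cast
    ring
  have hshift : Complex.exp (Complex.I * (b * ↑(r + x / b)))
      = Complex.exp (x * Complex.I) * Complex.exp (Complex.I * (b * r)) := by
    have hbt : b * (r + x / b) = b * r + x := by field_simp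
    rw [← Complex.exp_add, ← Complex.ofReal_mul, hbt]
    push_cast
    ring
  linear_combination Complex.exp (Complex.I * (b * r)) * h + hshift - w * hrot

theorem exists_pos_lt_sin_cos_pos {c : ℝ} (hc : 0 < c) :
    ∃ θ, 0 < θ ∧ θ < c ∧ θ ≤ π ∧ 0 < min (sin θ) (cos θ) := by
  set θ := min (c / 2) (π / 4)
  have hθ₀ : 0 < θ := lt_min (by positivity) (by positivity)
  have hθ_le : θ ≤ π / 4 := min_le_right _ _
  refine ⟨θ, hθ₀, (min_le_left _ _).trans_lt (half_lt_self hc), by linarith [pi_pos], ?_⟩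
  exact lt_min (sin_pos_of_pos_of_lt_pi hθ₀ (by linarith [pi_pos]))
    (cos_pos_of_mem_Ioo ⟨by linarith [pi_pos], by linarith [pi_pos]⟩)

/-- Abstract form of Lemma 4.4: if `ε(t) → 0` as `t → ∞` and `b ≠ 0`, then for every
`δ > 0` and every sufficiently large `r`, the phase `b·r` is attained by the argument
of `e^{ibt} + ε(t)` for some `t` within `δ` of `r`, i.e. `e^{ibt} + ε(t) = ρ·e^{ibr}`
for some `t ∈ (r - δ, r + δ)` and some `ρ > 0`. -/
theorem arg_attained_near
    (b : ℝ) (hb : b ≠ 0) (ε : ℝ → ℂ) (hcont : Continuous ε)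
    (hlim : Tendsto ε atTop (nhds 0)) :
    ∀ δ : ℝ, 0 < δ → ∃ R : ℝ, 0 < R ∧ ∀ r : ℝ, R ≤ r →
      ∃ t ∈ Set.Ioo (r - δ) (r + δ), ∃ ρ : ℝ, 0 < ρ ∧
        Complex.exp (Complex.I * (b * t)) + ε t = (ρ : ℂ) * Complex.exp (Complex.I * (b * r)) := by
  intro δ hδ
  obtain ⟨θ, hθ₀, hθ_lt, hθπ, hc⟩ := exists_pos_lt_sin_cos_pos (mul_pos (abs_pos.mpr hb) hδ)
  obtain ⟨R₀, hR₀⟩ := eventually_atTop.mp (hlim.eventually (Metric.ball_mem_nhds 0 hc))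
  refine ⟨|R₀| + δ, by positivity, fun r hr => ?_⟩
  have ht (x : ℝ) (hx : x ∈ Icc (-θ) θ) : r + x / b ∈ Ioo (r - δ) (r + δ) := by
    have : |x / b| < δ := by
      rw [abs_div, div_lt_iff₀ (abs_pos.mpr hb)]
      linarith [abs_le.mpr hx]
    constructor <;> linarith [abs_lt.mp this]
  obtain ⟨x, hx, ρ, hρ, hxρ⟩ := exists_exp_mul_I_add_eq_ofReal_pos hθ₀.le hθπ
    (η := fun x => ε (r + x / b) * Complex.exp (↑(-(b * r)) * Complex.I))
    (Continuous.continuousOn (by fun_prop))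
    (fun x hx => by
      rw [norm_mul, Complex.norm_exp_ofReal_mul_I, mul_one]
      simpa using hR₀ _ (by linarith [le_abs_self R₀, (ht x hx).1]))
  exact ⟨r + x / b, ht x hx, ρ, hρ, exp_mul_I_add_eq_of_rotate hb hxρ⟩
end

section
/- Let k > 0 and R > 0. There exists a constant C > 0 such that for all x, y in EuclideanSpace ℝ (Fin 3) with ‖y‖ ≤ R and ‖x‖ ≥ 2R, one has |‖x‖·e^{k‖x‖}·e^{−k‖x−y‖}/‖x − y‖ − e^{k·⟪x,y⟫/‖x‖}| ≤ C/‖x‖, where all exponentials here are real exponentials. -/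
/-!
Write `r = ‖x‖`, `d = ‖x - y‖` and `p = ⟪x, y⟫ / r`. Then
`r e^{kr} e^{-kd} / d - e^{kp} = e^{kp} ((r / d) e^{-t} - 1)` with `t = k (d - (r - p))`.
By Cauchy–Schwarz `r - p ≤ d`, and since `d² - (r - p)² = ‖y‖² - p² ≤ ‖y‖²` while
`d + (r - p) ≥ r` once `2‖y‖ ≤ r`, we get `0 ≤ t ≤ k‖y‖² / r`. Together with
`|r / d - 1| ≤ 2‖y‖ / r` and `|e^{-t} - 1| ≤ t` this bounds the bracket by `O(1 / r)`.
-/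

open scoped RealInnerProductSpace
open Real

lemma abs_mul_exp_neg_sub_one_le {ρ t : ℝ} (hρ : 0 ≤ ρ) (ht : 0 ≤ t) :
    |ρ * exp (-t) - 1| ≤ ρ * t + |ρ - 1| := by
  have hexp : |exp (-t) - 1| ≤ t := by
    rw [abs_sub_comm, abs_of_nonneg (sub_nonneg.2 (exp_le_one_iff.2 (neg_nonpos.2 ht)))]
    linarith [add_one_le_exp (-t)]
  calc |ρ * exp (-t) - 1| = |ρ * (exp (-t) - 1) + (ρ - 1)| := by ring_nf
    _ ≤ |ρ * (exp (-t) - 1)| + |ρ - 1| := abs_add_le _ _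
    _ ≤ ρ * t + |ρ - 1| := by
      rw [abs_mul, abs_of_nonneg hρ]
      gcongr

section NormedGroup

variable {E : Type*} [NormedAddCommGroup E] {x y : E}

lemma half_norm_le_norm_sub (hxy : 2 * ‖y‖ ≤ ‖x‖) : ‖x‖ / 2 ≤ ‖x - y‖ := by
  linarith [norm_sub_norm_le x y]

lemma abs_norm_div_norm_sub_sub_one_le (hx : x ≠ 0) (hxy : 2 * ‖y‖ ≤ ‖x‖) :
    |‖x‖ / ‖x - y‖ - 1| ≤ 2 * ‖y‖ / ‖x‖ := by
  have hx₀ : 0 < ‖x‖ := norm_pos_iff.2 hx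
  have hd := half_norm_le_norm_sub hxy
  have hd₀ : 0 < ‖x - y‖ := by linarith
  have hdiff : |‖x‖ - ‖x - y‖| ≤ ‖y‖ := by simpa using abs_norm_sub_norm_le x (x - y)
  rw [div_sub_one hd₀.ne', abs_div, abs_of_pos hd₀, div_le_div_iff₀ hd₀ hx₀]
  nlinarith [abs_nonneg (‖x‖ - ‖x - y‖)]

end NormedGroup

section InnerProductSpace

variable {E : Type*} [NormedAddCommGroup E] [InnerProductSpace ℝ E] {x y : E}

lemma abs_inner_div_norm_le (x y : E) : |⟪x, y⟫ / ‖x‖| ≤ ‖y‖ := by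
  rw [abs_div, abs_norm]
  exact div_le_of_le_mul₀ (norm_nonneg x) (norm_nonneg y)
    ((abs_real_inner_le_norm x y).trans_eq (mul_comm _ _))

/-- Cauchy–Schwarz applied to `⟪x, x - y⟫`. -/
lemma norm_sub_inner_div_norm_le_norm_sub (x y : E) : ‖x‖ - ⟪x, y⟫ / ‖x‖ ≤ ‖x - y‖ := by
  rcases eq_or_ne x 0 with rfl | hx
  · simp
  have hx₀ : 0 < ‖x‖ := norm_pos_iff.2 hx
  have hcs := real_inner_le_norm x (x - y)
  rw [inner_sub_right, real_inner_self_eq_norm_sq] at hcs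
  rw [sub_le_iff_le_add, ← sub_le_iff_le_add', le_div_iff₀ hx₀]
  nlinarith

lemma norm_sub_le_norm_sub_inner_div_norm_add (hx : x ≠ 0) (hxy : 2 * ‖y‖ ≤ ‖x‖) :
    ‖x - y‖ ≤ ‖x‖ - ⟪x, y⟫ / ‖x‖ + ‖y‖ ^ 2 / ‖x‖ := by
  have hx₀ : 0 < ‖x‖ := norm_pos_iff.2 hx
  set p := ⟪x, y⟫ / ‖x‖ with hp
  have hinner : ⟪x, y⟫ = p * ‖x‖ := by rw [hp, div_mul_cancel₀ _ hx₀.ne']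
  have hpy : |p| ≤ ‖y‖ := abs_inner_div_norm_le x y
  have hsq : ‖x - y‖ ^ 2 = (‖x‖ - p) ^ 2 + (‖y‖ ^ 2 - p ^ 2) := by
    rw [norm_sub_sq_real, hinner]; ring
  have hlow := norm_sub_inner_div_norm_le_norm_sub x y
  have hp_le := (abs_le.1 hpy).2
  rw [← sub_le_iff_le_add', le_div_iff₀ hx₀]
  nlinarith [sq_abs p, abs_nonneg p]

lemma norm_mul_exp_mul_exp_neg_div_sub_exp_inner_le {k : ℝ} (hk : 0 ≤ k) (hx : x ≠ 0)
    (hxy : 2 * ‖y‖ ≤ ‖x‖) :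
    |‖x‖ * exp (k * ‖x‖) * exp (-(k * ‖x - y‖)) / ‖x - y‖ - exp (k * (⟪x, y⟫ / ‖x‖))|
      ≤ 2 * ‖y‖ * exp (k * ‖y‖) * (k * ‖y‖ + 1) / ‖x‖ := by
  have hx₀ : 0 < ‖x‖ := norm_pos_iff.2 hx
  have hd₀ : 0 < ‖x - y‖ := by linarith [half_norm_le_norm_sub hxy]
  set p := ⟪x, y⟫ / ‖x‖
  set t := k * (‖x - y‖ - (‖x‖ - p)) with ht
  have ht₀ : 0 ≤ t := mul_nonneg hk (sub_nonneg.2 (norm_sub_inner_div_norm_le_norm_sub x y))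
  have ht_le : t ≤ k * ‖y‖ ^ 2 / ‖x‖ := by
    rw [ht, mul_div_assoc]
    exact mul_le_mul_of_nonneg_left
      (by linarith [norm_sub_le_norm_sub_inner_div_norm_add hx hxy]) hk
  have hρ : ‖x‖ / ‖x - y‖ ≤ 2 := by
    rw [div_le_iff₀ hd₀]; linarith [half_norm_le_norm_sub hxy]
  have hexp_p : exp (k * p) ≤ exp (k * ‖y‖) := by
    gcongr
    exact (le_abs_self p).trans (abs_inner_div_norm_le x y)
  have hfactor : ‖x‖ * exp (k * ‖x‖) * exp (-(k * ‖x - y‖)) / ‖x - y‖ - exp (k * p)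
      = exp (k * p) * (‖x‖ / ‖x - y‖ * exp (-t) - 1) := by
    have : exp (k * ‖x‖) * exp (-(k * ‖x - y‖)) = exp (k * p) * exp (-t) := by
      rw [← exp_add, ← exp_add, ht]; ring_nf
    rw [mul_assoc ‖x‖, this]
    field_simp
  rw [hfactor, abs_mul, abs_exp]
  calc exp (k * p) * |‖x‖ / ‖x - y‖ * exp (-t) - 1|
      ≤ exp (k * ‖y‖) * (2 * (k * ‖y‖ ^ 2 / ‖x‖) + 2 * ‖y‖ / ‖x‖) := by
        gcongr
        calc _ ≤ ‖x‖ / ‖x - y‖ * t + |‖x‖ / ‖x - y‖ - 1| :=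
              abs_mul_exp_neg_sub_one_le (by positivity) ht₀
          _ ≤ _ := by
            gcongr
            exact abs_norm_div_norm_sub_sub_one_le hx hxy
    _ = 2 * ‖y‖ * exp (k * ‖y‖) * (k * ‖y‖ + 1) / ‖x‖ := by ring

end InnerProductSpace

/-- Uniform far-field asymptotics of the fundamental solution of the modified Helmholtz
equation in three dimensions:
`‖x‖·e^{k‖x‖}·e^{-k‖x-y‖}/‖x-y‖ = e^{k⟪x,y⟫/‖x‖} + O(1/‖x‖)` uniformly for
`‖y‖ ≤ R` and `‖x‖ ≥ 2R`, with real exponentials. -/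
theorem modified_helmholtz_fundamental_farfield (k R : ℝ) (hk : 0 < k) (hR : 0 < R) :
    ∃ C : ℝ, 0 < C ∧ ∀ x y : EuclideanSpace ℝ (Fin 3), ‖y‖ ≤ R → 2 * R ≤ ‖x‖ →
      |‖x‖ * Real.exp (k * ‖x‖) * Real.exp (-(k * ‖x - y‖)) / ‖x - y‖
        - Real.exp (k * (⟪x, y⟫ / ‖x‖))| ≤ C / ‖x‖ := by
  refine ⟨2 * R * exp (k * R) * (k * R + 1), by positivity, fun x y hy hx => ?_⟩
  have hx₀ : x ≠ 0 := norm_pos_iff.1 (by linarith)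
  calc _ ≤ 2 * ‖y‖ * exp (k * ‖y‖) * (k * ‖y‖ + 1) / ‖x‖ :=
        norm_mul_exp_mul_exp_neg_div_sub_exp_inner_le hk.le hx₀ (by linarith)
    _ ≤ 2 * R * exp (k * R) * (k * R + 1) / ‖x‖ := by gcongr
end
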